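/- arXiv:2402.04906 — 2 statements merged into one kernel-verified Lean document; each statement's English description precedes it below -/
import Mathlib

section
/- Let R₁, …, R_{n+1} be exchangeable (in particular, i.i.d.) real-valued random variables and let φ be uniformly distributed on [0,1], independent of (R₁, …, R_{n+1}). Define the smoothed conformal p-value U = ( Σ_{i=1}^{n+1} 1[R_i < R_{n+1}] + φ · Σ_{i=1}^{n+1} 1[R_i = R_{n+1}] ) / (n + 1). Then U is uniformly distributed on [0,1]: for every α ∈ [0,1], P(U ≤ α) = α. -/
open MeasureTheory ProbabilityTheory
open scoped ENNReal

section ScpAux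
open Finset

/-- Telescoping lemma over a finset of reals ordered by `<`. -/
lemma scp_telescope (T : ℝ) (hT : 0 ≤ T) (w : ℝ → ℝ) (s : Finset ℝ) :
    ∑ v ∈ s, (min T ((∑ u ∈ s.filter (· < v), w u) + w v)
      - min T (∑ u ∈ s.filter (· < v), w u)) = min T (∑ v ∈ s, w v) := by
  classical
  induction s using Finset.induction_on_max with
  | empty => simp [min_eq_right hT]
  | insert a s ha ih =>
    have hanotmem : a ∉ s := fun h => lt_irrefl a (ha a h)
    rw [Finset.sum_insert hanotmem, Finset.sum_insert hanotmem]
    have h1 : (insert a s).filter (· < a) = s := by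
      ext x
      simp only [Finset.mem_filter, Finset.mem_insert]
      constructor
      · rintro ⟨hx | hx, hlt⟩
        · exact absurd hlt (by simp [hx])
        · exact hx
      · exact fun hx => ⟨Or.inr hx, ha x hx⟩
    have h2 : ∀ v ∈ s, (insert a s).filter (· < v) = s.filter (· < v) := by
      intro v hv
      rw [Finset.filter_insert, if_neg (not_lt.mpr (ha v hv).le)]
    have h3 : ∑ v ∈ s, (min T ((∑ u ∈ (insert a s).filter (· < v), w u) + w v)
        - min T (∑ u ∈ (insert a s).filter (· < v), w u))
        = ∑ v ∈ s, (min T ((∑ u ∈ s.filter (· < v), w u) + w v)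
        - min T (∑ u ∈ s.filter (· < v), w u)) := by
      apply Finset.sum_congr rfl
      intro v hv
      rw [h2 v hv]
    rw [h1, h3, ih]
    ring_nf

/-- clamp identity. -/
lemma scp_clamp (T l e : ℝ) (he : 0 < e) :
    min (max ((T - l) / e) 0) 1 = (min T (l + e) - min T l) / e := by
  rcases le_total T l with h | h
  · rw [min_eq_left (h.trans (by linarith)), min_eq_left h]
    rw [max_eq_right (div_nonpos_of_nonpos_of_nonneg (by linarith) he.le)]
    simp
  · rcases le_total T (l + e) with h2 | h2
    · rw [min_eq_left h2, min_eq_right h]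
      rw [max_eq_left (div_nonneg (by linarith) he.le)]
      rw [min_eq_left (by rw [div_le_one he]; linarith)]
    · rw [min_eq_right h2, min_eq_right h]
      rw [max_eq_left (div_nonneg (by linarith) he.le)]
      rw [min_eq_right (by rw [le_div_iff₀ he]; linarith)]
      field_simp
      ring

/-- Pointwise combinatorial identity: the clamped ranks sum to `T`. -/
lemma scp_pointwise (n : ℕ) (r : Fin (n + 1) → ℝ) (T : ℝ) (hT0 : 0 ≤ T)
    (hT1 : T ≤ n + 1) :
    ∑ j, min (max ((T - ∑ i, if r i < r j then (1 : ℝ) else 0) /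
      (∑ i, if r i = r j then (1 : ℝ) else 0)) 0) 1 = T := by
  classical
  set Lc : ℝ → ℝ := fun v => ∑ i, if r i < v then (1 : ℝ) else 0 with hLc
  set Ec : ℝ → ℝ := fun v => ∑ i, if r i = v then (1 : ℝ) else 0 with hEc
  set G : ℝ → ℝ := fun v => min (max ((T - Lc v) / Ec v) 0) 1 with hG
  have hEcard : ∀ v, Ec v = ((Finset.univ.filter (fun i => r i = v)).card : ℝ) := by
    intro v; simp [hEc, Finset.sum_boole]
  have hEpos : ∀ v ∈ Finset.univ.image r, 0 < Ec v := by
    intro v hv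
    rw [Finset.mem_image] at hv
    obtain ⟨j, _, hj⟩ := hv
    rw [hEcard]
    have : j ∈ Finset.univ.filter (fun i => r i = v) := by simp [hj]
    exact_mod_cast Finset.card_pos.mpr ⟨j, this⟩
  have hLsum : ∀ v, Lc v = ∑ u ∈ (Finset.univ.image r).filter (· < v), Ec u := by
    intro v
    have h := Finset.sum_fiberwise_of_maps_to' (t := Finset.univ.image r)
      (g := r) (s := Finset.univ) (fun i _ => Finset.mem_image_of_mem r (Finset.mem_univ i))
      (fun u => if u < v then (1 : ℝ) else 0)
    rw [hLc]
    simp only [← h]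
    rw [Finset.sum_filter]
    apply Finset.sum_congr rfl
    intro u _
    rw [Finset.sum_const, hEcard]
    by_cases hu : u < v <;> simp [hu]
  have hTot : ∑ u ∈ Finset.univ.image r, Ec u = (n : ℝ) + 1 := by
    have h := Finset.sum_fiberwise_of_maps_to' (t := Finset.univ.image r)
      (g := r) (s := Finset.univ) (fun i _ => Finset.mem_image_of_mem r (Finset.mem_univ i))
      (fun _ : ℝ => (1 : ℝ))
    have h2 : ∑ u ∈ Finset.univ.image r, Ec u
        = ∑ u ∈ Finset.univ.image r, ∑ j ∈ Finset.univ.filter (fun i => r i = u), (1 : ℝ) := by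
      apply Finset.sum_congr rfl
      intro u _
      rw [hEcard, Finset.sum_const]
      simp
    rw [h2, h]
    simp [Fin.sum_univ_eq_sum_range]
  -- rewrite the main sum fiberwise
  have hmain : ∑ j, G (r j)
      = ∑ v ∈ Finset.univ.image r, ∑ j ∈ Finset.univ.filter (fun i => r i = v), G v :=
    (Finset.sum_fiberwise_of_maps_to' (fun i _ => Finset.mem_image_of_mem r (Finset.mem_univ i))
      G).symm
  calc ∑ j, min (max ((T - ∑ i, if r i < r j then (1 : ℝ) else 0) /
        (∑ i, if r i = r j then (1 : ℝ) else 0)) 0) 1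
      = ∑ j, G (r j) := rfl
    _ = ∑ v ∈ Finset.univ.image r, ∑ j ∈ Finset.univ.filter (fun i => r i = v), G v := hmain
    _ = ∑ v ∈ Finset.univ.image r, Ec v * G v := by
        apply Finset.sum_congr rfl
        intro v _
        rw [Finset.sum_const, hEcard, nsmul_eq_mul]
    _ = ∑ v ∈ Finset.univ.image r,
          (min T ((∑ u ∈ (Finset.univ.image r).filter (· < v), Ec u) + Ec v)
            - min T (∑ u ∈ (Finset.univ.image r).filter (· < v), Ec u)) := by
        apply Finset.sum_congr rfl
        intro v hv
        rw [hG]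
        simp only
        rw [scp_clamp T (Lc v) (Ec v) (hEpos v hv), hLsum v]
        rw [mul_div_assoc']
        exact mul_div_cancel_left₀ _ (ne_of_gt (hEpos v hv))
    _ = min T (∑ v ∈ Finset.univ.image r, Ec v) := scp_telescope T hT0 Ec _
    _ = T := by rw [hTot]; exact min_eq_left hT1

lemma scp_ofReal_min_max (t : ℝ) :
    ENNReal.ofReal (min t 1) = ENNReal.ofReal (min (max t 0) 1) := by
  rcases le_total t 0 with h | h
  · rw [min_eq_left (h.trans zero_le_one), max_eq_right h]
    simp [ENNReal.ofReal_eq_zero.mpr h]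
  · rw [max_eq_left h]


end ScpAux

/-- Under exchangeability of the conformity scores `R₁, …, R_{n+1}` and with a tie-breaking
variable `φ ~ Uniform[0,1]` independent of the scores, the smoothed conformal p-value
`U = (∑ᵢ 1[Rᵢ < R_{n+1}] + φ · ∑ᵢ 1[Rᵢ = R_{n+1}]) / (n+1)` is exactly uniformly distributed
on `[0,1]`: `P(U ≤ α) = α` for every `α ∈ [0,1]`. -/
theorem smoothed_conformal_pvalue_uniform
    {Ω : Type*} [MeasurableSpace Ω] (μ : Measure Ω) [IsProbabilityMeasure μ]
    (n : ℕ) (R : Fin (n + 1) → Ω → ℝ) (hR : ∀ i, Measurable (R i))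
    (hexch : ∀ σ : Equiv.Perm (Fin (n + 1)),
      μ.map (fun ω => fun i => R (σ i) ω) = μ.map (fun ω => fun i => R i ω))
    (φ : Ω → ℝ) (hφm : Measurable φ)
    (hφunif : μ.map φ = volume.restrict (Set.Icc (0 : ℝ) 1))
    (hφindep : IndepFun (fun ω => fun i => R i ω) φ μ)
    (U : Ω → ℝ)
    (hU : ∀ ω, U ω =
      ((∑ i, if R i ω < R (Fin.last n) ω then (1 : ℝ) else 0)
        + φ ω * ∑ i, if R i ω = R (Fin.last n) ω then (1 : ℝ) else 0) / (n + 1)) :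
    ∀ α ∈ Set.Icc (0 : ℝ) 1, μ {ω | U ω ≤ α} = ENNReal.ofReal α := by
  classical
  intro α hα
  obtain ⟨hα0, hα1⟩ := hα
  set T : ℝ := α * (n + 1) with hTdef
  have hnpos : (0 : ℝ) < n + 1 := by positivity
  have hT0 : 0 ≤ T := by positivity
  have hT1 : T ≤ n + 1 := by
    calc T = α * (n+1) := rfl
    _ ≤ 1 * (n+1) := by gcongr
    _ = n + 1 := one_mul _
  -- notation
  set X : Ω → (Fin (n + 1) → ℝ) := fun ω i => R i ω with hXdef
  have hX : Measurable X := measurable_pi_lambda _ hR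
  set ν : Measure (Fin (n + 1) → ℝ) := μ.map X with hνdef
  haveI : IsProbabilityMeasure ν := Measure.isProbabilityMeasure_map hX.aemeasurable
  set Lf : Fin (n + 1) → (Fin (n + 1) → ℝ) → ℝ :=
    fun j r => ∑ i, if r i < r j then (1 : ℝ) else 0 with hLfdef
  set Ef : Fin (n + 1) → (Fin (n + 1) → ℝ) → ℝ :=
    fun j r => ∑ i, if r i = r j then (1 : ℝ) else 0 with hEfdef
  have hLm : ∀ j, Measurable (Lf j) := fun j =>
    Finset.measurable_sum _ (fun i _ => Measurable.ite
      (measurableSet_lt (measurable_pi_apply i) (measurable_pi_apply j))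
      measurable_const measurable_const)
  have hEm : ∀ j, Measurable (Ef j) := by
    intro j
    apply Finset.measurable_sum
    intro i _
    have hset : MeasurableSet {r : Fin (n+1) → ℝ | r i = r j} := by
      have : {r : Fin (n+1) → ℝ | r i = r j}
          = {r : Fin (n+1) → ℝ | r i ≤ r j} ∩ {r : Fin (n+1) → ℝ | r j ≤ r i} := by
        ext r; simp only [Set.mem_setOf_eq, Set.mem_inter_iff]
        constructor
        · intro h; exact ⟨le_of_eq h, ge_of_eq h⟩
        · intro ⟨h1, h2⟩; exact le_antisymm h1 h2
      rw [this]
      exact (measurableSet_le (measurable_pi_apply i) (measurable_pi_apply j)).inter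
        (measurableSet_le (measurable_pi_apply j) (measurable_pi_apply i))
    exact Measurable.ite hset measurable_const measurable_const
  have hEpos : ∀ j r, (1 : ℝ) ≤ Ef j r := by
    intro j r
    have h := Finset.single_le_sum (f := fun i => if r i = r j then (1 : ℝ) else 0)
      (fun i _ => by positivity) (Finset.mem_univ j)
    simp only [if_pos rfl] at h
    exact h
  set F : Fin (n + 1) → (Fin (n + 1) → ℝ) → ℝ :=
    fun j r => min (max ((T - Lf j r) / Ef j r) 0) 1 with hFdef
  have hFm : ∀ j, Measurable fun r => ENNReal.ofReal (F j r) := fun j =>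
    ENNReal.measurable_ofReal.comp
      ((((measurable_const.sub (hLm j)).div (hEm j)).max measurable_const).min measurable_const)
  -- Step A : rewrite the probability as an integral against ν
  have stepA : μ {ω | U ω ≤ α}
      = ∫⁻ r, ENNReal.ofReal (F (Fin.last n) r) ∂ν := by
    set S : Set ((Fin (n + 1) → ℝ) × ℝ) :=
      {p | Lf (Fin.last n) p.1 + p.2 * Ef (Fin.last n) p.1 ≤ T} with hSdef
    have hS : MeasurableSet S := by
      apply measurableSet_le _ measurable_const
      exact ((hLm _).comp measurable_fst).add
        (measurable_snd.mul ((hEm _).comp measurable_fst))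
    have hset : {ω | U ω ≤ α} = (fun ω => (X ω, φ ω)) ⁻¹' S := by
      ext ω
      simp only [Set.mem_setOf_eq, Set.mem_preimage, hSdef, hU ω]
      rw [div_le_iff₀ hnpos]
    have hmap : μ.map (fun ω => (X ω, φ ω)) = ν.prod (volume.restrict (Set.Icc (0:ℝ) 1)) := by
      rw [hνdef, ← hφunif]
      exact (indepFun_iff_map_prod_eq_prod_map_map hX.aemeasurable hφm.aemeasurable).mp hφindep
    rw [hset, ← Measure.map_apply (hX.prodMk hφm) hS, hmap, Measure.prod_apply hS]
    apply lintegral_congr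
    intro r
    have hE1 : (0:ℝ) < Ef (Fin.last n) r := lt_of_lt_of_le one_pos (hEpos (Fin.last n) r)
    have hpre : Prod.mk r ⁻¹' S = Set.Iic ((T - Lf (Fin.last n) r) / Ef (Fin.last n) r) := by
      ext u
      simp only [Set.mem_preimage, hSdef, Set.mem_setOf_eq, Set.mem_Iic]
      rw [le_div_iff₀ hE1]
      constructor <;> intro h <;> linarith
    rw [hpre, Measure.restrict_apply' measurableSet_Icc]
    have hinter : Set.Iic ((T - Lf (Fin.last n) r) / Ef (Fin.last n) r) ∩ Set.Icc (0:ℝ) 1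
        = Set.Icc 0 (min ((T - Lf (Fin.last n) r) / Ef (Fin.last n) r) 1) := by
      ext x
      simp only [Set.mem_inter_iff, Set.mem_Iic, Set.mem_Icc, le_min_iff]
      tauto
    rw [hinter, Real.volume_Icc, sub_zero, scp_ofReal_min_max]
  -- Step B : exchangeability
  have stepB : ∀ j, (∫⁻ r, ENNReal.ofReal (F (Fin.last n) r) ∂ν)
      = ∫⁻ r, ENNReal.ofReal (F j r) ∂ν := by
    intro j
    set σ : Equiv.Perm (Fin (n + 1)) := Equiv.swap (Fin.last n) j with hσ
    have hXσ : Measurable (fun ω => fun i => R (σ i) ω) :=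
      measurable_pi_lambda _ (fun i => hR _)
    have hkey : ∀ r : Fin (n + 1) → ℝ, F (Fin.last n) (fun i => r (σ i)) = F j r := by
      intro r
      have hσlast : σ (Fin.last n) = j := Equiv.swap_apply_left _ _
      have hL : Lf (Fin.last n) (fun i => r (σ i)) = Lf j r := by
        simp only [hLfdef, hσlast]
        exact Equiv.sum_comp σ (fun k => if r k < r j then (1:ℝ) else 0)
      have hE : Ef (Fin.last n) (fun i => r (σ i)) = Ef j r := by
        simp only [hEfdef, hσlast]
        exact Equiv.sum_comp σ (fun k => if r k = r j then (1:ℝ) else 0)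
      simp only [hFdef, hL, hE]
    calc ∫⁻ r, ENNReal.ofReal (F (Fin.last n) r) ∂ν
        = ∫⁻ r, ENNReal.ofReal (F (Fin.last n) r)
            ∂(μ.map (fun ω => fun i => R (σ i) ω)) := by rw [hexch σ, hνdef]
      _ = ∫⁻ ω, ENNReal.ofReal (F (Fin.last n) (fun i => R (σ i) ω)) ∂μ :=
          lintegral_map (hFm _) hXσ
      _ = ∫⁻ ω, ENNReal.ofReal (F j (X ω)) ∂μ := by
          apply lintegral_congr; intro ω
          rw [show (fun i => R (σ i) ω) = (fun i => X ω (σ i)) from rfl, hkey (X ω)]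
      _ = ∫⁻ r, ENNReal.ofReal (F j r) ∂ν := (lintegral_map (hFm j) hX).symm
  -- Step C : summing over j
  have hFnonneg : ∀ j r, 0 ≤ F j r := fun j r =>
    le_min (le_max_right _ _) zero_le_one
  have stepC : ∑ j, (∫⁻ r, ENNReal.ofReal (F j r) ∂ν) = ENNReal.ofReal T := by
    rw [← lintegral_finset_sum _ (fun j _ => hFm j)]
    have : ∀ r, ∑ j, ENNReal.ofReal (F j r) = ENNReal.ofReal T := by
      intro r
      rw [← ENNReal.ofReal_sum_of_nonneg (fun j _ => hFnonneg j r)]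
      congr 1
      exact scp_pointwise n r T hT0 hT1
    rw [lintegral_congr this, lintegral_const, measure_univ, mul_one]
  -- assemble
  have hsum : ∑ j, (∫⁻ r, ENNReal.ofReal (F j r) ∂ν)
      = ((n : ℝ≥0∞) + 1) * ∫⁻ r, ENNReal.ofReal (F (Fin.last n) r) ∂ν := by
    rw [Finset.sum_congr rfl (fun j _ => (stepB j).symm), Finset.sum_const]
    simp only [Finset.card_univ, Fintype.card_fin, nsmul_eq_mul]
    push_cast
    ring
  have hT' : ENNReal.ofReal T = ((n : ℝ≥0∞) + 1) * ENNReal.ofReal α := by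
    rw [hTdef, ENNReal.ofReal_mul hα0]
    have : ENNReal.ofReal ((n : ℝ) + 1) = (n : ℝ≥0∞) + 1 := by
      rw [show ((n : ℝ) + 1) = ((n + 1 : ℕ) : ℝ) by push_cast; ring, ENNReal.ofReal_natCast]
      push_cast; ring
    rw [this]; ring
  have hmain : ((n : ℝ≥0∞) + 1) * (∫⁻ r, ENNReal.ofReal (F (Fin.last n) r) ∂ν)
      = ((n : ℝ≥0∞) + 1) * ENNReal.ofReal α := by
    rw [← hsum, stepC, hT']
  rw [stepA]
  have hne0 : ((n : ℝ≥0∞) + 1) ≠ 0 := by simp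
  have hnetop : ((n : ℝ≥0∞) + 1) ≠ ⊤ := by simp [ENNReal.add_ne_top]
  exact (ENNReal.mul_right_inj hne0 hnetop).mp hmain
end

section
/- Let R_{m+1}, …, R_n, R_{n+1} be exchangeable (in particular, i.i.d.) real-valued random variables (n − m calibration scores and one test score). Sort the calibration scores in descending order R*₁ ≥ R*₂ ≥ … ≥ R*_{n−m}, fix α ∈ (0,1) with s = ⌊α(n − m + 1)⌋ ≥ 1, and let R*_s be the s-th largest calibration score. Then P(R_{n+1} ≤ R*_s) ≥ 1 − α. -/
open MeasureTheory ProbabilityTheory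

/-- `cntSC v i`: number of indices `j` with `v j ≥ v i`. -/
noncomputable def cntSC {N : ℕ} (v : Fin N → ℝ) (i : Fin N) : ℕ :=
  (Finset.univ.filter fun j => v i ≤ v j).card

lemma cntSC_comp {N : ℕ} (σ : Equiv.Perm (Fin N)) (v : Fin N → ℝ) (i : Fin N) :
    cntSC (v ∘ σ) i = cntSC v (σ i) := by
  unfold cntSC
  apply Finset.card_bij' (fun j _ => σ j) (fun j _ => σ.symm j) <;> simp

lemma cntSC_card_le {N : ℕ} (v : Fin N → ℝ) (s : ℕ) :
    (Finset.univ.filter fun i => cntSC v i ≤ s).card ≤ s := by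
  set B := Finset.univ.filter fun i => cntSC v i ≤ s with hB
  rcases B.eq_empty_or_nonempty with h | h
  · simp [h]
  · obtain ⟨i₀, hi₀B, hmin⟩ := B.exists_min_image v h
    have hsub : B ⊆ Finset.univ.filter fun j => v i₀ ≤ v j := by
      intro j hj
      simp only [Finset.mem_filter, Finset.mem_univ, true_and]
      exact hmin j hj
    have h1 : B.card ≤ cntSC v i₀ := Finset.card_le_card hsub
    have h2 : cntSC v i₀ ≤ s := by
      simpa [hB, Finset.mem_filter] using hi₀B
    exact h1.trans h2

lemma countP_sorted_le {L : List ℝ} (hL : L.Pairwise (· ≥ ·)) {k : ℕ} (hk : k < L.length)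
    {y : ℝ} (hy : L.getD k 0 < y) :
    L.countP (fun x => decide (y ≤ x)) ≤ k := by
  have hsplit : L = L.take k ++ L.drop k := (List.take_append_drop k L).symm
  rw [hsplit, List.countP_append]
  have h1 : (L.take k).countP (fun x => decide (y ≤ x)) ≤ k :=
    List.countP_le_length.trans (by simpa using (List.length_take k L).le.trans (by simp))
  have h2 : (L.drop k).countP (fun x => decide (y ≤ x)) = 0 := by
    rw [List.countP_eq_zero]
    intro x hx
    obtain ⟨i, hi, hix⟩ := List.getElem_of_mem hx
    rw [List.getElem_drop] at hix
    have hki : k + i < L.length := by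
      have := hi; rw [List.length_drop] at this; omega
    have hle : L[k + i] ≤ L[k]'hk := by
      rcases Nat.eq_or_lt_of_le (Nat.le_add_right k i) with he | hlt
      · simp [← he]
      · exact hL.rel_get_of_le (a := ⟨k, hk⟩) (b := ⟨k + i, hki⟩) (by simpa using hlt.le)
    have : x < y := lt_of_le_of_lt (hix ▸ hle) (by rwa [List.getD_eq_getElem _ _ hk] at hy)
    simp [not_le.mpr this]
  omega

lemma countP_ofFn {K : ℕ} (f : Fin K → ℝ) (p : ℝ → Bool) :
    (List.ofFn f).countP p = (Finset.univ.filter fun i => p (f i)).card := by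
  induction K with
  | zero => rfl
  | succ K ih =>
    rw [List.ofFn_succ, List.countP_cons, ih (fun i => f i.succ)]
    rw [Finset.card_filter, Finset.card_filter, Fin.sum_univ_succ]
    by_cases hp : p (f 0) <;> simp [hp] <;> omega

open scoped ENNReal

/-- Marginal coverage of split conformal prediction: if the `n − m` calibration scores together
with the test score `R_{n+1}` are exchangeable, and `R*_s` denotes the `s`-th largest calibration
score with `s = ⌊α(n − m + 1)⌋ ≥ 1`, then `P(R_{n+1} ≤ R*_s) ≥ 1 − α`. -/
theorem split_conformal_coverage
    {Ω : Type*} [MeasurableSpace Ω] (μ : Measure Ω) [IsProbabilityMeasure μ]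
    (m n : ℕ) (hmn : m < n)
    (R : Fin (n - m + 1) → Ω → ℝ) (hR : ∀ i, Measurable (R i))
    (hexch : ∀ σ : Equiv.Perm (Fin (n - m + 1)),
      μ.map (fun ω => fun i => R (σ i) ω) = μ.map (fun ω => fun i => R i ω))
    (α : ℝ) (hα : α ∈ Set.Ioo (0 : ℝ) 1)
    (s : ℕ) (hs : s = ⌊α * ((n - m + 1 : ℕ) : ℝ)⌋₊) (hs1 : 1 ≤ s)
    (Rstar : Ω → ℝ)
    (hRstar : ∀ ω, Rstar ω =
      ((List.ofFn fun i : Fin (n - m) => R i.castSucc ω).insertionSort (· ≥ ·)).getD (s - 1) 0) :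
    ENNReal.ofReal (1 - α) ≤ μ {ω | R (Fin.last (n - m)) ω ≤ Rstar ω} := by
  have hK1 : 1 ≤ n - m := by omega
  -- s < n - m + 1
  have hsN : s < n - m + 1 := by
    rw [hs]
    have h0 : (0:ℝ) ≤ α * ((n - m + 1 : ℕ) : ℝ) := by
      have : (0:ℝ) ≤ ((n - m + 1 : ℕ) : ℝ) := Nat.cast_nonneg _
      exact mul_nonneg hα.1.le this
    rw [Nat.floor_lt h0]
    have hpos : (0:ℝ) < ((n - m + 1 : ℕ) : ℝ) := by positivity
    calc α * ((n - m + 1 : ℕ) : ℝ) < 1 * ((n - m + 1 : ℕ) : ℝ) :=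
          mul_lt_mul_of_pos_right hα.2 hpos
      _ = ((n - m + 1 : ℕ) : ℝ) := one_mul _
  -- the random vector
  set T : Ω → (Fin (n - m + 1) → ℝ) := fun ω i => R i ω with hT
  have hTm : Measurable T := measurable_pi_lambda _ hR
  -- measurability of cntSC as function of the vector
  have hcnt : ∀ i : Fin (n - m + 1), Measurable fun v : Fin (n - m + 1) → ℝ => cntSC v i := by
    intro i
    have h : (fun v : Fin (n - m + 1) → ℝ => cntSC v i) =
        fun v => ∑ j, if v i ≤ v j then 1 else 0 := by
      funext v; exact Finset.card_filter _ _
    rw [h]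
    apply Finset.measurable_sum
    intro j _
    exact Measurable.ite (measurableSet_le (measurable_pi_apply i) (measurable_pi_apply j))
      measurable_const measurable_const
  -- events
  set E : Fin (n - m + 1) → Set Ω := fun i => T ⁻¹' {v | cntSC v i ≤ s} with hE
  have hSm : ∀ i : Fin (n - m + 1), MeasurableSet {v : Fin (n - m + 1) → ℝ | cntSC v i ≤ s} := by
    intro i
    exact (hcnt i) (by trivial : MeasurableSet (Set.Iic s))
  have hEm : ∀ i, MeasurableSet (E i) := fun i => hTm (hSm i)
  -- exchangeability: all events have equal probability
  have hEq : ∀ i : Fin (n - m + 1), μ (E i) = μ (E (Fin.last (n - m))) := by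
    intro i
    set σ := Equiv.swap i (Fin.last (n - m)) with hσ
    have hmapσ : Measurable (fun ω => fun j : Fin (n - m + 1) => R (σ j) ω) :=
      measurable_pi_lambda _ fun j => hR (σ j)
    have h := hexch σ
    have h2 := congrArg
      (fun ν : Measure (Fin (n - m + 1) → ℝ) => ν {v | cntSC v (Fin.last (n - m)) ≤ s}) h
    rw [Measure.map_apply hmapσ (hSm (Fin.last (n - m))),
        Measure.map_apply hTm (hSm (Fin.last (n - m)))] at h2
    have hpre : (fun ω => fun j : Fin (n - m + 1) => R (σ j) ω) ⁻¹'
        {v | cntSC v (Fin.last (n - m)) ≤ s} = E i := by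
      ext ω
      simp only [Set.mem_preimage, Set.mem_setOf_eq, hE]
      have hco : (fun j : Fin (n - m + 1) => R (σ j) ω) = (T ω) ∘ σ := rfl
      rw [hco, cntSC_comp σ (T ω) (Fin.last (n - m)), hσ, Equiv.swap_apply_right]
    rw [hpre] at h2
    exact h2
  -- sum of probabilities bounded by s
  have hsum : ∑ i : Fin (n - m + 1), μ (E i) ≤ (s : ℝ≥0∞) := by
    have h1 : ∑ i : Fin (n - m + 1), μ (E i)
        = ∫⁻ ω, ∑ i : Fin (n - m + 1), (E i).indicator (fun _ => (1:ℝ≥0∞)) ω ∂μ := by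
      rw [lintegral_finset_sum _ fun i _ => (measurable_const.indicator (hEm i))]
      exact Finset.sum_congr rfl fun i _ => (lintegral_indicator_one (hEm i)).symm
    rw [h1]
    have h2 : ∀ ω, ∑ i : Fin (n - m + 1), (E i).indicator (fun _ => (1:ℝ≥0∞)) ω
        ≤ (s : ℝ≥0∞) := by
      intro ω
      have h3 : ∑ i : Fin (n - m + 1), (E i).indicator (fun _ => (1:ℝ≥0∞)) ω
          = ((Finset.univ.filter fun i : Fin (n - m + 1) => cntSC (T ω) i ≤ s).card : ℝ≥0∞) := by
        rw [Finset.card_filter]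
        push_cast
        refine Finset.sum_congr rfl fun i _ => ?_
        by_cases hc : cntSC (T ω) i ≤ s <;>
          simp [Set.indicator_apply, hE, Set.mem_preimage, Set.mem_setOf_eq, hc]
      rw [h3]
      exact_mod_cast cntSC_card_le (T ω) s
    calc ∫⁻ ω, ∑ i : Fin (n - m + 1), (E i).indicator (fun _ => (1:ℝ≥0∞)) ω ∂μ
        ≤ ∫⁻ _, (s : ℝ≥0∞) ∂μ := lintegral_mono h2
      _ = (s : ℝ≥0∞) := by simp
  -- hence μ (E last) ≤ ofReal α
  have hp : μ (E (Fin.last (n - m))) ≤ ENNReal.ofReal α := by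
    have hNp : ((n - m + 1 : ℕ) : ℝ≥0∞) ≠ 0 := by exact_mod_cast Nat.succ_ne_zero (n - m)
    have hNt : ((n - m + 1 : ℕ) : ℝ≥0∞) ≠ ⊤ := ENNReal.natCast_ne_top _
    have hsum2 : ((n - m + 1 : ℕ) : ℝ≥0∞) * μ (E (Fin.last (n - m))) ≤ (s : ℝ≥0∞) := by
      calc ((n - m + 1 : ℕ) : ℝ≥0∞) * μ (E (Fin.last (n - m)))
          = ∑ _i : Fin (n - m + 1), μ (E (Fin.last (n - m))) := by
            simp [Finset.sum_const, nsmul_eq_mul]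
        _ = ∑ i : Fin (n - m + 1), μ (E i) := (Finset.sum_congr rfl fun i _ => (hEq i).symm)
        _ ≤ (s : ℝ≥0∞) := hsum
    have hsα : (s : ℝ≥0∞) ≤ ((n - m + 1 : ℕ) : ℝ≥0∞) * ENNReal.ofReal α := by
      have hf : (s : ℝ) ≤ α * ((n - m + 1 : ℕ) : ℝ) := by
        rw [hs]
        exact Nat.floor_le (mul_nonneg hα.1.le (Nat.cast_nonneg _))
      calc (s : ℝ≥0∞) = ENNReal.ofReal (s : ℝ) := by simp
        _ ≤ ENNReal.ofReal (α * ((n - m + 1 : ℕ) : ℝ)) := ENNReal.ofReal_le_ofReal hf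
        _ = ENNReal.ofReal (((n - m + 1 : ℕ) : ℝ)) * ENNReal.ofReal α := by
            rw [mul_comm]; exact ENNReal.ofReal_mul (Nat.cast_nonneg _)
        _ = ((n - m + 1 : ℕ) : ℝ≥0∞) * ENNReal.ofReal α := by
            rw [ENNReal.ofReal_natCast]
    exact (ENNReal.mul_le_mul_iff_right hNp hNt).mp (hsum2.trans hsα)
  -- complement of the target set is contained in E last
  have hsub : {ω | R (Fin.last (n - m)) ω ≤ Rstar ω}ᶜ ⊆ E (Fin.last (n - m)) := by
    intro ω hω
    simp only [Set.mem_compl_iff, Set.mem_setOf_eq, not_le] at hω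
    set y := R (Fin.last (n - m)) ω with hy
    set f : Fin (n - m) → ℝ := fun i => R i.castSucc ω with hf
    set L := (List.ofFn f).insertionSort (· ≥ ·) with hL
    have hLlen : L.length = n - m := by
      rw [hL, List.length_insertionSort, List.length_ofFn]
    have hkL : s - 1 < L.length := by omega
    have hsorted : L.Pairwise (· ≥ ·) := List.pairwise_insertionSort _ _
    have hcount : L.countP (fun x => decide (y ≤ x)) ≤ s - 1 := by
      apply countP_sorted_le hsorted hkL
      have := hRstar ω
      rw [← hL] at this
      rw [← this]; exact hω
    have hcount2 : (Finset.univ.filter fun i : Fin (n - m) => y ≤ f i).card ≤ s - 1 := by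
      have hperm := (List.perm_insertionSort (· ≥ ·) (List.ofFn f)).countP_eq
        (fun x => decide (y ≤ x))
      rw [← hL] at hperm
      have h4 : (Finset.univ.filter fun i : Fin (n - m) => y ≤ f i).card
          = (List.ofFn f).countP (fun x => decide (y ≤ x)) := by
        rw [countP_ofFn]
        simp
      omega
    show cntSC (T ω) (Fin.last (n - m)) ≤ s
    have hcnteq : cntSC (T ω) (Fin.last (n - m))
        = (Finset.univ.filter fun i : Fin (n - m) => y ≤ f i).card + 1 := by
      unfold cntSC
      rw [Finset.card_filter, Finset.card_filter, Fin.sum_univ_castSucc]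
      have hlast : T ω (Fin.last (n - m)) = y := rfl
      have hcs : ∀ i : Fin (n - m), T ω i.castSucc = f i := fun i => rfl
      simp [hlast, hcs]
    omega
  -- conclude
  have hcompl : μ {ω | R (Fin.last (n - m)) ω ≤ Rstar ω}ᶜ ≤ ENNReal.ofReal α :=
    (measure_mono hsub).trans hp
  have huniv : (1 : ℝ≥0∞) ≤ μ {ω | R (Fin.last (n - m)) ω ≤ Rstar ω}
      + μ {ω | R (Fin.last (n - m)) ω ≤ Rstar ω}ᶜ := by
    have h := measure_union_le (μ := μ) {ω | R (Fin.last (n - m)) ω ≤ Rstar ω}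
      {ω | R (Fin.last (n - m)) ω ≤ Rstar ω}ᶜ
    rw [Set.union_compl_self] at h
    simpa using h
  have h1 : (1 : ℝ≥0∞) ≤ μ {ω | R (Fin.last (n - m)) ω ≤ Rstar ω} + ENNReal.ofReal α :=
    huniv.trans (add_le_add_right hcompl _)
  have hfinal : ENNReal.ofReal (1 - α) ≤ (1 : ℝ≥0∞) - ENNReal.ofReal α := by
    rw [ENNReal.ofReal_sub _ hα.1.le]
    simp
  exact hfinal.trans (tsub_le_iff_right.mpr h1)
end
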